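/- arXiv:2302.04417 — 2 statements merged into one kernel-verified Lean document; each statement's English description precedes it below -/
import Mathlib

section
/- Let A^1,…,A^T be RUM matrices; for each t let A^{t*} be obtained from A^t by deleting, in every menu except the first, one designated row, assume each A^{t*} has full row rank, and let H^t be a matrix such that {A^{t*} v : v ≥ 0} = {z : H^t z ≥ 0}. Assume moreover that A^{t*} has full column rank for every t ∈ {1,…,T} with at most one exception. Then for a vector ρ indexed by tuples of row indices of A^1,…,A^T: there exists a componentwise nonnegative ν with (⊗_{t=1}^T A^t) ν = ρ if and only if ρ is stable and (⊗_{t=1}^T H^t) ρ* ≥ 0, where ρ* is the subvector of ρ on tuples of rows retained in A^{1*},…,A^{T*}. -/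
open Matrix

noncomputable section

/-- Iterated Kronecker product of a family of matrices, in product-index form:
rows and columns are indexed by tuples of indices, which correspond to the rows
and columns of the iterated Kronecker product via the lexicographic bijection. -/
def kronPi {T : ℕ} {R C : Fin T → Type*} (A : ∀ t, Matrix (R t) (C t) ℝ) :
    Matrix (∀ t, R t) (∀ t, C t) ℝ :=
  Matrix.of fun r c => ∏ t, A t (r t) (c t)

/-- The `V`-representation: the cone of all nonnegative combinations of columns of `K`. -/
def coneV {m n : Type*} [Fintype n] (K : Matrix m n ℝ) : Set (m → ℝ) :=
  {z | ∃ v : n → ℝ, 0 ≤ v ∧ K.mulVec v = z}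

/-- The `H`-representation: the cone cut out by the inequalities `L z ≥ 0`. -/
def coneH {q m : Type*} [Fintype m] (L : Matrix q m ℝ) : Set (m → ℝ) :=
  {z | 0 ≤ L.mulVec z}

/-- `A` is a RUM matrix with menus given by the fibers of `menu`: the entries of `A`
lie in `{0,1}`, the menus (fibers of `menu`) are nonempty, and every column has
exactly one entry equal to `1` in each menu. -/
def IsRUMMatrix {Row Col M : Type*} (A : Matrix Row Col ℝ) (menu : Row → M) : Prop :=
  Function.Surjective menu ∧
  (∀ r c, A r c = 0 ∨ A r c = 1) ∧
  (∀ (c : Col) (j : M), ∃! r, menu r = j ∧ A r c = 1)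

/-- A vector `ρ` indexed by tuples of rows is stable: for every period `t`, every pair of
menus `j, j'` of period `t`, and every fixed tuple of rows in the other periods, the sum
of `ρ` over the rows of menu `j` in position `t` equals the sum over the rows of `j'`. -/
def IsStable {T : ℕ} {Row : Fin T → Type*} [∀ t, Fintype (Row t)]
    {M : Fin T → Type*} [∀ t, DecidableEq (M t)]
    (menu : ∀ t, Row t → M t) (ρ : (∀ t, Row t) → ℝ) : Prop :=
  ∀ (t : Fin T) (j j' : M t) (r : ∀ s, Row s),
    ∑ x ∈ Finset.univ.filter (fun x => menu t x = j), ρ (Function.update r t x) =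
      ∑ x ∈ Finset.univ.filter (fun x => menu t x = j'), ρ (Function.update r t x)

/-- `D` is a valid set of deleted rows given a first menu `j₀`: no row of the first menu is
deleted, and exactly one designated row is deleted from every other menu. -/
def IsDeletion {Row M : Type*} (menu : Row → M) (j₀ : M) (D : Finset Row) : Prop :=
  (∀ r ∈ D, menu r ≠ j₀) ∧ ∀ j : M, j ≠ j₀ → ∃! r, r ∈ D ∧ menu r = j

lemma kronPi_mul {T : ℕ} {R S U : Fin T → Type*} [∀ t, Fintype (S t)]
    (M : ∀ t, Matrix (R t) (S t) ℝ) (N : ∀ t, Matrix (S t) (U t) ℝ) :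
    kronPi M * kronPi N = kronPi (fun t => M t * N t) := by
  classical
  ext r u
  simp only [kronPi, Matrix.mul_apply, Matrix.of_apply]
  rw [Fintype.prod_sum (fun t (c : S t) => M t (r t) c * N t c (u t))]
  exact Finset.sum_congr rfl fun c _ => (Finset.prod_mul_distrib).symm

lemma kronPi_one {T : ℕ} {C : Fin T → Type*} [∀ t, Fintype (C t)] [∀ t, DecidableEq (C t)] :
    kronPi (fun t => (1 : Matrix (C t) (C t) ℝ)) = 1 := by
  classical
  ext r c
  simp only [kronPi, Matrix.of_apply, Matrix.one_apply]
  by_cases h : r = c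
  · simp [h]
  · obtain ⟨t, ht⟩ := Function.ne_iff.mp h
    rw [if_neg h]
    exact Finset.prod_eq_zero (Finset.mem_univ t) (by simp [ht])

lemma sum_pi_cons {T : ℕ} {C : Fin (T+1) → Type*} [∀ t, Fintype (C t)]
    (f : (∀ t, C t) → ℝ) :
    ∑ c : ∀ t, C t, f c = ∑ c₀ : C 0, ∑ cc : ∀ t : Fin T, C t.succ, f (Fin.cons c₀ cc) := by
  rw [← (Fin.consEquiv C).sum_comp f]
  exact Fintype.sum_prod_type _

lemma eq_one_of_mulVec_id {n : Type*} [Fintype n] [DecidableEq n] (K : Matrix n n ℝ)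
    (h : ∀ u, K.mulVec u = u) : K = 1 := by
  ext i j
  have h2 := congrFun (h (Pi.single j 1)) i
  rw [Matrix.mulVec_single_one] at h2
  change K i j = _ at h2
  rw [h2, Matrix.one_apply, Pi.single_apply]

lemma kron_mulVec_inv {T : ℕ} {R C : Fin T → Type*} [∀ t, Fintype (R t)] [∀ t, Fintype (C t)]
    (B : ∀ t, Matrix (R t) (C t) ℝ) (G : ∀ t, Matrix (C t) (R t) ℝ)
    (h : ∀ t (u : R t → ℝ), (B t).mulVec ((G t).mulVec u) = u)
    (f : (∀ t, R t) → ℝ) : (kronPi B).mulVec ((kronPi G).mulVec f) = f := by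
  classical
  have hBG : ∀ t, B t * G t = 1 := fun t =>
    eq_one_of_mulVec_id _ (fun u => by rw [← Matrix.mulVec_mulVec]; exact h t u)
  rw [Matrix.mulVec_mulVec, kronPi_mul]
  have : (fun t => B t * G t) = fun t => (1 : Matrix (R t) (R t) ℝ) := funext hBG
  rw [this, kronPi_one, Matrix.one_mulVec]

lemma kron_mulVec_cons {T : ℕ} {R C : Fin (T+1) → Type*} [∀ t, Fintype (C t)]
    (A : ∀ t, Matrix (R t) (C t) ℝ) (v : (∀ t, C t) → ℝ)
    (r₀ : R 0) (rr : ∀ t : Fin T, R t.succ) :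
    (kronPi A).mulVec v (Fin.cons r₀ rr) =
      ∑ c₀ : C 0, A 0 r₀ c₀ *
        ((kronPi (fun t => A t.succ)).mulVec (fun cc => v (Fin.cons c₀ cc)) rr) := by
  simp only [Matrix.mulVec, dotProduct, kronPi, Matrix.of_apply]
  rw [sum_pi_cons (fun c => (∏ t, A t (Fin.cons r₀ rr t) (c t)) * v c)]
  refine Finset.sum_congr rfl fun c₀ _ => ?_
  rw [Finset.mul_sum]
  refine Finset.sum_congr rfl fun cc _ => ?_
  rw [Fin.prod_univ_succ]
  simp [mul_assoc]

lemma sum_mulVec_swap {a b ι : Type*} [Fintype b] [Fintype ι] (M : Matrix a b ℝ)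
    (w : ι → ℝ) (f : ι → b → ℝ) (q : a) :
    ∑ i, w i * M.mulVec (f i) q = M.mulVec (fun x => ∑ i, w i * f i x) q := by
  simp only [Matrix.mulVec, dotProduct, Finset.mul_sum]
  rw [Finset.sum_comm]
  exact Finset.sum_congr rfl fun x _ => Finset.sum_congr rfl fun i _ => by ring

universe u v w

/-- mulVec-style two-sided invertibility. -/
def RegM {R C : Type*} [Fintype R] [Fintype C] (B : Matrix R C ℝ) : Prop :=
  ∃ G : Matrix C R ℝ, (∀ u, B.mulVec (G.mulVec u) = u) ∧ (∀ v, G.mulVec (B.mulVec v) = v)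

lemma core (T : ℕ) :
    ∀ {R : Fin T → Type u} {C : Fin T → Type v} {Q : Fin T → Type w}
      [∀ t, Fintype (R t)] [∀ t, Fintype (C t)] [∀ t, Fintype (Q t)]
      (B : ∀ t, Matrix (R t) (C t) ℝ) (H : ∀ t, Matrix (Q t) (R t) ℝ),
      (∀ t (u : R t → ℝ), 0 ≤ (H t).mulVec u → ∃ v, 0 ≤ v ∧ (B t).mulVec v = u) →
      (∀ t s, t ≠ s → RegM (B t) ∨ RegM (B s)) →
      ∀ z : (∀ t, R t) → ℝ, 0 ≤ (kronPi H).mulVec z →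
        ∃ ν, 0 ≤ ν ∧ (kronPi B).mulVec ν = z := by
  induction T with
  | zero =>
    intro R C Q _ _ _ B H hH hreg z hz
    refine ⟨fun _ => z default, fun c => ?_, funext fun r => ?_⟩
    · have := hz default
      simpa [kronPi, Matrix.mulVec, dotProduct, Finset.univ_unique] using this
    · simp [kronPi, Matrix.mulVec, dotProduct, Finset.univ_unique,
        Subsingleton.elim r default]
  | succ T ih =>
    intro R C Q _ _ _ B H hH hreg z hz
    by_cases hr0 : RegM (B 0)
    case pos =>
      obtain ⟨G, hBGv, hGBv⟩ := hr0
      -- slices of z transformed by G in coordinate 0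
      set z' : C 0 → (∀ t : Fin T, R t.succ) → ℝ :=
        fun c₀ rr => G.mulVec (fun r₀ => z (Fin.cons r₀ rr)) c₀ with hz'
      have claimB : ∀ c₀, 0 ≤ (kronPi (fun t => H t.succ)).mulVec (z' c₀) := by
        intro c₀ qr
        set u : R 0 → ℝ :=
          fun r₀ => (kronPi (fun t => H t.succ)).mulVec (fun rr => z (Fin.cons r₀ rr)) qr with hu
        have hu0 : 0 ≤ (H 0).mulVec u := by
          intro q₀
          have := hz (Fin.cons q₀ qr)
          rwa [kron_mulVec_cons] at this
        obtain ⟨w, hw0, hwu⟩ := hH 0 u hu0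
        have hGu : G.mulVec u = w := by rw [← hwu, hGBv]
        have key : (kronPi (fun t => H t.succ)).mulVec (z' c₀) qr = G.mulVec u c₀ := by
          show _ = ∑ r₀, G c₀ r₀ * u r₀
          rw [hu]
          rw [sum_mulVec_swap (kronPi (fun t => H t.succ)) (fun r₀ => G c₀ r₀)
            (fun r₀ rr => z (Fin.cons r₀ rr)) qr]
          rfl
        rw [key, hGu]; exact hw0 c₀
      have claimEx : ∀ c₀, ∃ ν', 0 ≤ ν' ∧
          (kronPi (fun t => B t.succ)).mulVec ν' = z' c₀ := by
        intro c₀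
        exact ih (fun t => B t.succ) (fun t => H t.succ) (fun t => hH t.succ)
          (fun t s hts => hreg t.succ s.succ (fun h => hts (Fin.succ_injective _ h)))
          (z' c₀) (claimB c₀)
      choose ν' hν'0 hν' using claimEx
      refine ⟨fun c => ν' (c 0) (fun t => c t.succ), fun c => hν'0 _ _, funext fun r => ?_⟩
      rw [← Fin.cons_self_tail r, kron_mulVec_cons]
      have step : ∀ c₀ : C 0,
          (kronPi (fun t => B t.succ)).mulVec
            (fun cc => ν' (Fin.cons c₀ cc 0) fun t => Fin.cons c₀ cc t.succ) (Fin.tail r)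
          = z' c₀ (Fin.tail r) := by
        intro c₀
        have : (fun cc : ∀ t : Fin T, C t.succ =>
            ν' (Fin.cons c₀ cc 0) fun t => Fin.cons c₀ cc t.succ) = ν' c₀ := by
          funext cc; simp
        rw [this, hν']
      simp only [step]
      -- ∑ c₀, B 0 (r 0) c₀ * z' c₀ (Fin.tail r) = z r
      have : ∑ c₀, B 0 (r 0) c₀ * z' c₀ (Fin.tail r)
          = (B 0).mulVec (G.mulVec (fun r₀ => z (Fin.cons r₀ (Fin.tail r)))) (r 0) := rfl
      rw [this, hBGv]
    case neg =>
      have hregT : ∀ t : Fin T, RegM (B t.succ) := fun t =>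
        (hreg 0 t.succ (fun h => (Fin.succ_ne_zero t) h.symm)).resolve_left hr0
      choose G hBGv hGBv using hregT
      set z'' : (∀ t : Fin T, C t.succ) → R 0 → ℝ :=
        fun cc r₀ => (kronPi G).mulVec (fun rr => z (Fin.cons r₀ rr)) cc with hz''
      have claimB : ∀ cc, 0 ≤ (H 0).mulVec (fun r₀ => z'' cc r₀) := by
        intro cc q₀
        set u : (∀ t : Fin T, R t.succ) → ℝ :=
          fun rr => (H 0).mulVec (fun r₀ => z (Fin.cons r₀ rr)) q₀ with hu
        have hu0 : 0 ≤ (kronPi (fun t => H t.succ)).mulVec u := by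
          intro qr
          have h1 := hz (Fin.cons q₀ qr)
          rw [kron_mulVec_cons] at h1
          rw [hu]
          rw [sum_mulVec_swap (kronPi (fun t => H t.succ)) (fun r₀ => H 0 q₀ r₀)
            (fun r₀ rr => z (Fin.cons r₀ rr)) qr] at h1
          simpa [Matrix.mulVec, dotProduct] using h1
        obtain ⟨w, hw0, hwu⟩ := ih (fun t => B t.succ) (fun t => H t.succ)
          (fun t => hH t.succ) (fun t s _ => Or.inl ⟨G t, hBGv t, hGBv t⟩) u hu0
        have hGu : (kronPi G).mulVec u = w := by
          rw [← hwu, kron_mulVec_inv _ _ hGBv]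
        have key : (H 0).mulVec (fun r₀ => z'' cc r₀) q₀ = (kronPi G).mulVec u cc := by
          show _ = ∑ rr, kronPi G cc rr * u rr
          rw [hu]
          rw [sum_mulVec_swap (H 0) (fun rr => kronPi G cc rr)
            (fun rr r₀ => z (Fin.cons r₀ rr)) q₀]
          rfl
        rw [key, hGu]; exact hw0 cc
      have claimEx : ∀ cc, ∃ ν', 0 ≤ ν' ∧ (B 0).mulVec ν' = fun r₀ => z'' cc r₀ :=
        fun cc => hH 0 _ (claimB cc)
      choose ν' hν'0 hν' using claimEx
      refine ⟨fun c => ν' (fun t => c t.succ) (c 0), fun c => hν'0 _ _, funext fun r => ?_⟩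
      rw [← Fin.cons_self_tail r, kron_mulVec_cons]
      have step : ∀ c₀ : C 0,
          (fun cc : ∀ t : Fin T, C t.succ =>
            ν' (fun t => Fin.cons c₀ cc t.succ) (Fin.cons c₀ cc 0))
          = fun cc => ν' cc c₀ := by
        intro c₀; funext cc; simp
      simp only [step]
      rw [sum_mulVec_swap (kronPi (fun t => B t.succ)) (fun c₀ => B 0 (r 0) c₀)
        (fun c₀ cc => ν' cc c₀) (Fin.tail r)]
      have e1 : (fun cc => ∑ c₀, B 0 (r 0) c₀ * ν' cc c₀) = fun cc => z'' cc (r 0) := by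
        funext cc
        exact congrFun (hν' cc) (r 0)
      rw [e1]
      have e2 : (fun cc => z'' cc (r 0))
          = (kronPi G).mulVec (fun rr => z (Fin.cons (r 0) rr)) := rfl
      rw [e2, kron_mulVec_inv _ _ hBGv]

lemma reg_of_rank {R C : Type*} [Fintype R] [Fintype C] (m : Matrix R C ℝ)
    (h1 : m.rank = Fintype.card R) (h2 : m.rank = Fintype.card C) : RegM m := by
  classical
  have hsurj : LinearMap.range m.mulVecLin = ⊤ := by
    apply Submodule.eq_top_of_finrank_eq
    rw [← Matrix.rank, h1, Module.finrank_pi]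
  have hinj : LinearMap.ker m.mulVecLin = ⊥ := by
    have h3 := LinearMap.finrank_range_add_finrank_ker m.mulVecLin
    rw [← Matrix.rank, h2] at h3
    have h4 : Module.finrank ℝ (LinearMap.ker m.mulVecLin) = 0 := by
      have := Module.finrank_pi (R := ℝ) (ι := C)
      omega
    exact Submodule.finrank_eq_zero.mp h4
  let e : (C → ℝ) ≃ₗ[ℝ] (R → ℝ) := LinearEquiv.ofBijective m.mulVecLin
    ⟨LinearMap.ker_eq_bot.mp hinj, LinearMap.range_eq_top.mp hsurj⟩
  refine ⟨LinearMap.toMatrix' (e.symm : (R → ℝ) →ₗ[ℝ] (C → ℝ)), fun u => ?_, fun v => ?_⟩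
  · have hg : (LinearMap.toMatrix' (e.symm : (R → ℝ) →ₗ[ℝ] (C → ℝ))).mulVec u = e.symm u := by
      rw [← Matrix.toLin'_apply, Matrix.toLin'_toMatrix']; rfl
    rw [hg]
    exact e.apply_symm_apply u
  · have hg : (LinearMap.toMatrix' (e.symm : (R → ℝ) →ₗ[ℝ] (C → ℝ))).mulVec (m.mulVec v)
        = e.symm (e v) := by
      rw [← Matrix.toLin'_apply, Matrix.toLin'_toMatrix']; rfl
    rw [hg, e.symm_apply_apply]

lemma rum_menu_sum {Row Col M : Type*} [Fintype Row] [DecidableEq M]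
    (A : Matrix Row Col ℝ) (menu : Row → M) (hA : IsRUMMatrix A menu) (c : Col) (j : M) :
    ∑ x ∈ Finset.univ.filter (fun x => menu x = j), A x c = 1 := by
  classical
  obtain ⟨-, h01, huniq⟩ := hA
  obtain ⟨r₁, ⟨hr₁m, hr₁v⟩, hunique⟩ := huniq c j
  rw [Finset.sum_eq_single_of_mem r₁ (by simp [hr₁m])]
  · exact hr₁v
  · intro x hx hne
    rcases h01 x c with h | h
    · exact h
    · exact absurd (hunique x ⟨(Finset.mem_filter.mp hx).2, h⟩) hne

lemma sum_menu_update {T : ℕ} {Row Col M : Fin T → Type*}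
    [∀ t, Fintype (Row t)] [∀ t, Fintype (Col t)] [∀ t, DecidableEq (Row t)]
    [∀ t, DecidableEq (M t)]
    (A : ∀ t, Matrix (Row t) (Col t) ℝ) (menu : ∀ t, Row t → M t)
    (hA : ∀ t, IsRUMMatrix (A t) (menu t))
    (ν : (∀ t, Col t) → ℝ) (t : Fin T) (j : M t) (r : ∀ s, Row s) :
    ∑ x ∈ Finset.univ.filter (fun x => menu t x = j),
        (kronPi A).mulVec ν (Function.update r t x)
      = ∑ c, (∏ s ∈ Finset.univ.erase t, A s (r s) (c s)) * ν c := by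
  classical
  simp only [Matrix.mulVec, dotProduct, kronPi, Matrix.of_apply]
  rw [Finset.sum_comm]
  refine Finset.sum_congr rfl fun c _ => ?_
  have hprod : ∀ x : Row t, (∏ s, A s (Function.update r t x s) (c s))
      = A t x (c t) * ∏ s ∈ Finset.univ.erase t, A s (r s) (c s) := by
    intro x
    rw [← Finset.mul_prod_erase Finset.univ _ (Finset.mem_univ t)]
    congr 1
    · rw [Function.update_self]
    · exact Finset.prod_congr rfl fun s hs =>
        by rw [Function.update_of_ne (Finset.ne_of_mem_erase hs)]
  simp only [hprod]
  have h2 : ∑ x ∈ Finset.univ.filter (fun x => menu t x = j),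
      (A t x (c t) * ∏ s ∈ Finset.univ.erase t, A s (r s) (c s)) * ν c
      = (∑ x ∈ Finset.univ.filter (fun x => menu t x = j), A t x (c t)) *
        ((∏ s ∈ Finset.univ.erase t, A s (r s) (c s)) * ν c) := by
    rw [Finset.sum_mul]
    exact Finset.sum_congr rfl fun x _ => by ring
  rw [h2, rum_menu_sum _ _ (hA t), one_mul]

lemma stable_of_rep {T : ℕ} {Row Col M : Fin T → Type*}
    [∀ t, Fintype (Row t)] [∀ t, Fintype (Col t)] [∀ t, DecidableEq (Row t)]
    [∀ t, DecidableEq (M t)]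
    (A : ∀ t, Matrix (Row t) (Col t) ℝ) (menu : ∀ t, Row t → M t)
    (hA : ∀ t, IsRUMMatrix (A t) (menu t)) (ν : (∀ t, Col t) → ℝ) :
    IsStable menu ((kronPi A).mulVec ν) := by
  intro t j j' r
  rw [sum_menu_update A menu hA ν t j r, sum_menu_update A menu hA ν t j' r]

lemma stable_vanish {T : ℕ} {Row M : Fin T → Type*}
    [∀ t, Fintype (Row t)] [∀ t, DecidableEq (Row t)] [∀ t, DecidableEq (M t)]
    (menu : ∀ t, Row t → M t) (j₀ : ∀ t, M t) (D : ∀ t, Finset (Row t))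
    (hD : ∀ t, IsDeletion (menu t) (j₀ t) (D t))
    (δ : (∀ t, Row t) → ℝ) (hst : IsStable menu δ)
    (h0 : ∀ r : ∀ t, Row t, (∀ t, r t ∉ D t) → δ r = 0) : ∀ r, δ r = 0 := by
  classical
  suffices h : ∀ n (r : ∀ t, Row t),
      (Finset.univ.filter fun t => r t ∈ D t).card ≤ n → δ r = 0 by
    intro r; exact h _ r le_rfl
  intro n
  induction n with
  | zero =>
    intro r hr
    apply h0
    intro t ht
    have : t ∈ Finset.univ.filter fun t => r t ∈ D t := by simp [ht]
    rw [Finset.card_eq_zero.mp (Nat.le_zero.mp hr)] at this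
    exact absurd this (Finset.notMem_empty t)
  | succ n ihn =>
    intro r hr
    by_cases hall : ∀ t, r t ∉ D t
    · exact h0 r hall
    · push_neg at hall
      obtain ⟨t, ht⟩ := hall
      have htmem : t ∈ Finset.univ.filter fun s => r s ∈ D s := by simp [ht]
      have hjne : menu t (r t) ≠ j₀ t := (hD t).1 _ ht
      have hcard : ∀ x : Row t, x ∉ D t →
          (Finset.univ.filter fun s => Function.update r t x s ∈ D s).card ≤ n := by
        intro x hx
        have hsub : (Finset.univ.filter fun s => Function.update r t x s ∈ D s)
            ⊆ (Finset.univ.filter fun s => r s ∈ D s).erase t := by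
          intro s hsf
          simp only [Finset.mem_filter, Finset.mem_univ, true_and] at hsf
          have hst' : s ≠ t := by
            rintro rfl
            rw [Function.update_self] at hsf
            exact hx hsf
          rw [Function.update_of_ne hst'] at hsf
          exact Finset.mem_erase.mpr ⟨hst', Finset.mem_filter.mpr ⟨Finset.mem_univ s, hsf⟩⟩
        have := Finset.card_le_card hsub
        rw [Finset.card_erase_of_mem htmem] at this
        omega
      have hs := hst t (menu t (r t)) (j₀ t) r
      have hR : ∑ x ∈ Finset.univ.filter (fun x => menu t x = j₀ t),
          δ (Function.update r t x) = 0 := by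
        refine Finset.sum_eq_zero fun x hx => ?_
        have hxD : x ∉ D t := fun hc =>
          (hD t).1 x hc (Finset.mem_filter.mp hx).2
        exact ihn _ (hcard x hxD)
      have hrtm : r t ∈ Finset.univ.filter (fun x => menu t x = menu t (r t)) := by simp
      rw [← Finset.add_sum_erase _ _ hrtm] at hs
      have hL : ∑ x ∈ (Finset.univ.filter
          (fun x => menu t x = menu t (r t))).erase (r t),
          δ (Function.update r t x) = 0 := by
        refine Finset.sum_eq_zero fun x hx => ?_
        obtain ⟨hne, hxf⟩ := Finset.mem_erase.mp hx
        have hxm : menu t x = menu t (r t) := (Finset.mem_filter.mp hxf).2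
        have hxD : x ∉ D t := by
          intro hc
          obtain ⟨w, -, hwu⟩ := (hD t).2 (menu t (r t)) hjne
          exact hne ((hwu x ⟨hc, hxm⟩).trans (hwu (r t) ⟨ht, rfl⟩).symm)
        exact ihn _ (hcard x hxD)
      rw [hL, add_zero, Function.update_eq_self, hR] at hs
      exact hs

/-- characterization of the unique DRUM.  Suppose each reduced matrix `A^{t*}`
has full row rank, `Hᵗ` gives the `H`-representation of the cone generated by `A^{t*}`, and
`A^{t*}` has full column rank for all `t` with at most one exception.  Then `ρ` has a
nonnegative representation `(⊗ₜ Aᵗ) ν = ρ` iff `ρ` is stable and `(⊗ₜ Hᵗ) ρ* ≥ 0`, where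
`ρ*` is the subvector of `ρ` on tuples of retained rows. -/
theorem unique_drum_characterization
    (T : ℕ) {Row Col M Q : Fin T → Type*}
    [∀ t, Fintype (Row t)] [∀ t, Fintype (Col t)] [∀ t, Fintype (Q t)]
    [∀ t, DecidableEq (Row t)] [∀ t, DecidableEq (M t)]
    (A : ∀ t, Matrix (Row t) (Col t) ℝ) (menu : ∀ t, Row t → M t)
    (hA : ∀ t, IsRUMMatrix (A t) (menu t))
    (j₀ : ∀ t, M t) (D : ∀ t, Finset (Row t))
    (hD : ∀ t, IsDeletion (menu t) (j₀ t) (D t))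
    (hrank : ∀ t,
      ((A t).submatrix (Subtype.val : {r : Row t // r ∉ D t} → Row t) id).rank =
        Fintype.card {r : Row t // r ∉ D t})
    (H : ∀ t, Matrix (Q t) {r : Row t // r ∉ D t} ℝ)
    (hH : ∀ t,
      coneV ((A t).submatrix (Subtype.val : {r : Row t // r ∉ D t} → Row t) id) =
        coneH (H t))
    (hfullcol : {t : Fin T |
      ((A t).submatrix (Subtype.val : {r : Row t // r ∉ D t} → Row t) id).rank ≠
        Fintype.card (Col t)}.Subsingleton)
    (ρ : (∀ t, Row t) → ℝ) :
    (∃ ν : (∀ t, Col t) → ℝ, 0 ≤ ν ∧ (kronPi A).mulVec ν = ρ) ↔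
      (IsStable menu ρ ∧
        0 ≤ (kronPi H).mulVec (fun r : ∀ t, {r : Row t // r ∉ D t} =>
          ρ (fun t => (r t : Row t)))) := by
  classical
  set Astar : ∀ t, Matrix {r : Row t // r ∉ D t} (Col t) ℝ :=
    fun t => (A t).submatrix (Subtype.val : {r : Row t // r ∉ D t} → Row t) id with hAstar
  constructor
  · rintro ⟨ν, hν0, hνρ⟩
    have hρstar : (fun r : ∀ t, {r : Row t // r ∉ D t} => ρ (fun t => (r t : Row t)))
        = (kronPi Astar).mulVec ν := by
      funext r
      rw [← hνρ]
      rfl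
    refine ⟨?_, ?_⟩
    · rw [← hνρ]; exact stable_of_rep A menu hA ν
    · rw [hρstar, Matrix.mulVec_mulVec, kronPi_mul]
      intro r
      simp only [Matrix.mulVec, dotProduct, kronPi, Matrix.of_apply]
      refine Finset.sum_nonneg fun c _ => mul_nonneg (Finset.prod_nonneg fun t _ => ?_) (hν0 c)
      have hcol : (fun x => Astar t x (c t)) ∈ coneH (H t) := by
        rw [← hH t]
        refine ⟨Pi.single (c t) 1, fun i => ?_, ?_⟩
        · rw [Pi.single_apply]
          positivity
        · rw [Matrix.mulVec_single_one]
          funext x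
          rfl
      simpa [Matrix.mul_apply, Matrix.mulVec, dotProduct] using hcol (r t)
  · rintro ⟨hstab, hpos⟩
    have hHside : ∀ t (u : {r : Row t // r ∉ D t} → ℝ), 0 ≤ (H t).mulVec u →
        ∃ v, 0 ≤ v ∧ (Astar t).mulVec v = u := by
      intro t u hu
      have hmem : u ∈ coneH (H t) := hu
      rw [← hH t] at hmem
      exact hmem
    have hregall : ∀ t s, t ≠ s → RegM (Astar t) ∨ RegM (Astar s) := by
      intro t s hts
      have hgood : (Astar t).rank = Fintype.card (Col t) ∨
          (Astar s).rank = Fintype.card (Col s) := by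
        by_contra hc
        push_neg at hc
        exact hts (hfullcol hc.1 hc.2)
      rcases hgood with hg | hg
      · exact Or.inl (reg_of_rank _ (hrank t) hg)
      · exact Or.inr (reg_of_rank _ (hrank s) hg)
    obtain ⟨ν, hν0, hν⟩ := core T Astar H hHside hregall
      (fun r => ρ (fun t => (r t : Row t))) hpos
    refine ⟨ν, hν0, ?_⟩
    have hδ : ∀ r, ρ r - (kronPi A).mulVec ν r = 0 := by
      apply stable_vanish menu j₀ D hD (fun r => ρ r - (kronPi A).mulVec ν r)
      · intro t j j' r
        have h1 := hstab t j j' r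
        have h2 := stable_of_rep A menu hA ν t j j' r
        simp only [Finset.sum_sub_distrib]
        rw [h1, h2]
      · intro r hr
        have h3 := congrFun hν (fun t => (⟨r t, hr t⟩ : {x : Row t // x ∉ D t}))
        have h4 : (kronPi A).mulVec ν r = ρ r := h3
        rw [h4]
        ring
    funext r
    have := hδ r
    linarith

end
end

section
/- Let A^1,…,A^T be RUM matrices and suppose ρ = (⊗_{t=1}^T A^t) ν for some componentwise nonnegative vector ν, where ρ is indexed by tuples (r_1,…,r_T) of row indices of A^1,…,A^T via the lexicographic bijection of indices. Fix t ∈ {1,…,T}. Then: (a) for every fixed tuple (r_s)_{s≠t} of row indices of the periods other than t, the vector whose r-th entry is ρ(r_1,…,r_{t−1}, r, r_{t+1},…,r_T), indexed by rows r of A^t, equals A^t μ for some componentwise nonnegative μ; (b) for every fixed tuple (j_s)_{s≠t} of menus of the periods other than t, the marginal vector m, whose r-th entry is the sum of ρ(r_1,…,r_T) over all tuples with period-t entry equal to r and with r_s ranging over the rows of menu j_s of A^s for each s ≠ t, equals A^t μ′ for some componentwise nonnegative μ′ whose entries sum to the sum of the entries of ν. -/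
set_option maxHeartbeats 1000000


open Matrix

noncomputable section

/-- In a RUM matrix, the entries of each column over a fixed menu sum to 1. -/
lemma rum_col_sum {Row Col M : Type*} [Fintype Row] [DecidableEq M]
    (A : Matrix Row Col ℝ) (menu : Row → M) (hA : IsRUMMatrix A menu)
    (c : Col) (j : M) :
    ∑ r ∈ Finset.univ.filter (fun r => menu r = j), A r c = 1 := by
  obtain ⟨r₀, ⟨hm, h1⟩, huniq⟩ := hA.2.2 c j
  rw [Finset.sum_eq_single_of_mem r₀ (by simp [hm])]
  · exact h1
  · intro b hb hne
    rcases hA.2.1 b c with h | h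
    · exact h
    · exact absurd (huniq b ⟨(Finset.mem_filter.mp hb).2, h⟩) hne

/-- Entries of a RUM matrix are nonnegative. -/
lemma rum_entry_nonneg {Row Col M : Type*}
    (A : Matrix Row Col ℝ) (menu : Row → M) (hA : IsRUMMatrix A menu)
    (r : Row) (c : Col) : 0 ≤ A r c := by
  rcases hA.2.1 r c with h | h <;> simp [h]

/-- if `ρ = (⊗ₜ Aᵗ) ν` with `ν ≥ 0`, then (a) every conditional vector of `ρ`
fixing the choices in the other periods is a nonnegative combination of columns of `Aᵗ`,
and (b) every marginal vector of `ρ` along a fixed menu path in the other periods is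
`Aᵗ μ'` with `μ' ≥ 0` and `Σ μ' = Σ ν`. -/
theorem drum_conditionals_and_marginals_are_rum
    (T : ℕ) {Row Col M : Fin T → Type*}
    [∀ t, Fintype (Row t)] [∀ t, Fintype (Col t)]
    [∀ t, DecidableEq (Row t)] [∀ t, DecidableEq (M t)]
    (A : ∀ t, Matrix (Row t) (Col t) ℝ) (menu : ∀ t, Row t → M t)
    (hA : ∀ t, IsRUMMatrix (A t) (menu t))
    (ν : (∀ t, Col t) → ℝ) (hν : 0 ≤ ν)
    (ρ : (∀ t, Row t) → ℝ) (hρ : (kronPi A).mulVec ν = ρ)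
    (t : Fin T) :
    (∀ r : ∀ s, Row s, ∃ μ : Col t → ℝ, 0 ≤ μ ∧
      (A t).mulVec μ = fun x : Row t => ρ (Function.update r t x)) ∧
    (∀ j : ∀ s, M s, ∃ μ' : Col t → ℝ, 0 ≤ μ' ∧
      ((A t).mulVec μ' = fun x : Row t =>
        ∑ r ∈ Finset.univ.filter (fun r : ∀ s, Row s =>
          r t = x ∧ ∀ s, s ≠ t → menu s (r s) = j s), ρ r) ∧
      ∑ c, μ' c = ∑ c, ν c) := by
  classical
  subst hρ
  constructor
  · -- conditionals
    intro r
    refine ⟨fun d => ∑ c ∈ Finset.univ.filter (fun c : ∀ s, Col s => c t = d),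
        (∏ s ∈ {t}ᶜ, A s (r s) (c s)) * ν c, ?_, ?_⟩
    · intro d
      refine Finset.sum_nonneg fun c _ => mul_nonneg
        (Finset.prod_nonneg fun s _ => rum_entry_nonneg (A s) (menu s) (hA s) _ _) (hν c)
    · funext x
      simp only [Matrix.mulVec, dotProduct, kronPi, Matrix.of_apply]
      calc ∑ d, A t x d * ∑ c ∈ Finset.univ.filter (fun c : ∀ s, Col s => c t = d),
            (∏ s ∈ {t}ᶜ, A s (r s) (c s)) * ν c
          = ∑ d, ∑ c ∈ Finset.univ.filter (fun c : ∀ s, Col s => c t = d),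
            A t x (c t) * ((∏ s ∈ {t}ᶜ, A s (r s) (c s)) * ν c) := by
            refine Finset.sum_congr rfl fun d _ => ?_
            rw [Finset.mul_sum]
            refine Finset.sum_congr rfl fun c hc => ?_
            rw [(Finset.mem_filter.mp hc).2]
        _ = ∑ c : ∀ s, Col s, A t x (c t) * ((∏ s ∈ {t}ᶜ, A s (r s) (c s)) * ν c) :=
            Finset.sum_fiberwise Finset.univ (fun c : ∀ s, Col s => c t)
              (fun c => A t x (c t) * ((∏ s ∈ {t}ᶜ, A s (r s) (c s)) * ν c))
        _ = ∑ c : ∀ s, Col s, (∏ s, A s (Function.update r t x s) (c s)) * ν c := by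
            refine Finset.sum_congr rfl fun c _ => ?_
            rw [Fintype.prod_eq_mul_prod_compl t fun s => A s (Function.update r t x s) (c s)]
            simp only [Function.update_self, ← mul_assoc]
            congr 2
            refine Finset.prod_congr rfl fun s hs => ?_
            have hs' : s ≠ t := by simpa using hs
            rw [Function.update_of_ne hs']
        _ = _ := rfl
  · -- marginals
    intro j
    refine ⟨fun d => ∑ c ∈ Finset.univ.filter (fun c : ∀ s, Col s => c t = d), ν c, ?_, ?_, ?_⟩
    · intro d
      exact Finset.sum_nonneg fun c _ => hν c
    · funext x
      -- the key combinatorial identity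
      set Tset : ∀ s, Finset (Row s) := fun s =>
        if h : s = t then {cast (congrArg Row h.symm) x}
        else Finset.univ.filter fun y => menu s y = j s with hTset
      have hSet : (Finset.univ.filter (fun r : ∀ s, Row s =>
          r t = x ∧ ∀ s, s ≠ t → menu s (r s) = j s)) = Fintype.piFinset Tset := by
        ext r
        simp only [Finset.mem_filter, Finset.mem_univ, true_and, Fintype.mem_piFinset]
        constructor
        · rintro ⟨h1, h2⟩ s
          by_cases hs : s = t
          · subst hs
            simp [hTset, h1]
          · simp [hTset, hs, h2 s hs]
        · intro h
          refine ⟨?_, fun s hs => ?_⟩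
          · have := h t
            simpa [hTset] using this
          · have := h s
            simpa [hTset, hs] using this
      have hkey : ∀ c : ∀ s, Col s,
          ∑ r ∈ Fintype.piFinset Tset, ∏ s, A s (r s) (c s) = A t x (c t) := by
        intro c
        rw [← Finset.prod_univ_sum Tset fun s y => A s y (c s)]
        rw [Fintype.prod_eq_single t]
        · simp [hTset]
        · intro s hs
          have : Tset s = Finset.univ.filter fun y => menu s y = j s := by
            simp [hTset, hs]
          rw [this]
          exact rum_col_sum (A s) (menu s) (hA s) (c s) (j s)
      simp only [Matrix.mulVec, dotProduct, kronPi, Matrix.of_apply, hSet]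
      calc ∑ d, A t x d * ∑ c ∈ Finset.univ.filter (fun c : ∀ s, Col s => c t = d), ν c
          = ∑ d, ∑ c ∈ Finset.univ.filter (fun c : ∀ s, Col s => c t = d),
              A t x (c t) * ν c := by
            refine Finset.sum_congr rfl fun d _ => ?_
            rw [Finset.mul_sum]
            exact Finset.sum_congr rfl fun c hc => by rw [(Finset.mem_filter.mp hc).2]
        _ = ∑ c : ∀ s, Col s, A t x (c t) * ν c :=
            Finset.sum_fiberwise Finset.univ (fun c : ∀ s, Col s => c t)
              (fun c => A t x (c t) * ν c)
        _ = ∑ c : ∀ s, Col s, (∑ r ∈ Fintype.piFinset Tset, ∏ s, A s (r s) (c s)) * ν c := by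
            refine Finset.sum_congr rfl fun c _ => ?_
            rw [hkey c]
        _ = ∑ r ∈ Fintype.piFinset Tset, ∑ c : ∀ s, Col s,
              (∏ s, A s (r s) (c s)) * ν c := by
            simp_rw [Finset.sum_mul]
            exact Finset.sum_comm
    · exact Finset.sum_fiberwise Finset.univ (fun c : ∀ s, Col s => c t) ν

end
end
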